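/- Let t, k, d, v be positive integers with t < k, v ≥ 2 and d < v, and set N = (d+1)·v^t. An N×k array A with all entries in Z_v is a (d,t)-DTA(N; k, v) (an optimum one, meeting the lower bound (d+1)v^t) if and only if A is a super-simple OA_{d+1}(t, k, v). -/
import Mathlib


/-- An array `A` (rows indexed by `R`, columns by `J`) is of type `v` if every
entry in column `j` lies in `Z_{v j} = {0, 1, …, v j - 1}`. -/
def IsArray {R J : Type*} (v : J → ℕ) (A : R → J → ℕ) : Prop :=
  ∀ r j, A r j < v j

/-- An `s`-way interaction: a set of `s` pairs `(j, σ)` with pairwise distinct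
column indices `j` and value `σ ∈ Z_{v j}`. -/
def IsInteraction {J : Type*} [DecidableEq J] (v : J → ℕ) (s : ℕ)
    (T : Finset (J × ℕ)) : Prop :=
  T.card = s ∧ (T.image Prod.fst).card = s ∧ ∀ p ∈ T, p.2 < v p.1

/-- `rho A T`: the set of rows of `A` in which the interaction `T` is covered. -/
def rho {R J : Type*} [Fintype R] (A : R → J → ℕ) (T : Finset (J × ℕ)) :
    Finset R :=
  Finset.univ.filter fun r => ∀ p ∈ T, A r p.1 = p.2

/-- `rhoSet A 𝒯 = ⋃_{T ∈ 𝒯} rho A T`. -/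
def rhoSet {R J : Type*} [Fintype R] [DecidableEq R] (A : R → J → ℕ)
    (Ts : Finset (Finset (J × ℕ))) : Finset R :=
  Ts.sup (rho A)

/-- A `(d,t)`-detecting array of type `v`: for every `t`-way interaction `T` and
every set `𝒯` of exactly `d` `t`-way interactions,
`ρ(A,T) ⊆ ρ(A,𝒯) ↔ T ∈ 𝒯`. -/
def IsDTA {R J : Type*} [Fintype R] [DecidableEq R] [DecidableEq J] (v : J → ℕ) (d t : ℕ)
    (A : R → J → ℕ) : Prop :=
  IsArray v A ∧
    ∀ T : Finset (J × ℕ), IsInteraction v t T →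
      ∀ Ts : Finset (Finset (J × ℕ)), Ts.card = d →
        (∀ T' ∈ Ts, IsInteraction v t T') →
          (rho A T ⊆ rhoSet A Ts ↔ T ∈ Ts)

/-- A mixed covering array `MCA_λ(N; t, k, v)`: an array of type `v` such that
`|ρ(A,T)| ≥ λ` for every `t`-way interaction `T`. -/
def IsMCA {R J : Type*} [Fintype R] [DecidableEq J] (v : J → ℕ) (lam t : ℕ)
    (A : R → J → ℕ) : Prop :=
  IsArray v A ∧ ∀ T : Finset (J × ℕ), IsInteraction v t T → lam ≤ (rho A T).card

/-- Super-simple of strength `t`: every `(t+1)`-way interaction is covered by at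
most one row. -/
def IsSuperSimple {R J : Type*} [Fintype R] [DecidableEq J] (v : J → ℕ) (t : ℕ)
    (A : R → J → ℕ) : Prop :=
  ∀ T : Finset (J × ℕ), IsInteraction v (t + 1) T → (rho A T).card ≤ 1

/-- An orthogonal array `OA_λ(t, k, v)`: all entries in `Z_v` and
`|ρ(A,T)| = λ` for every `t`-way interaction `T`. (The size requirement
`N = λ·v^t` is imposed on the row-index type in the statements.) -/
def IsOA {R J : Type*} [Fintype R] [DecidableEq J] (vlev lam t : ℕ)
    (A : R → J → ℕ) : Prop :=
  IsArray (fun _ : J => vlev) A ∧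
    ∀ T : Finset (J × ℕ), IsInteraction (fun _ : J => vlev) t T →
      (rho A T).card = lam

/-- `Te` is an extension of the interaction `T`: it is obtained from `T` by
adjoining one pair `(j, σ)` with `σ ∈ Z_{v j}` whose column index `j` occurs in
no pair of `T`. -/
def IsExtension {J : Type*} [DecidableEq J] (v : J → ℕ)
    (T Te : Finset (J × ℕ)) : Prop :=
  ∃ p : J × ℕ, p.2 < v p.1 ∧ (∀ q ∈ T, q.1 ≠ p.1) ∧ Te = insert p T

/-- `A` is `d`-extendible (with respect to strength `t`): for every `t`-way
interaction `T` and every list of `d` extensions `T_1, …, T_d` of `T`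
(repetitions allowed), `ρ(A,T) \ (ρ(A,T_1) ∪ ⋯ ∪ ρ(A,T_d))` is nonempty. -/
def IsExtendible {R J : Type*} [Fintype R] [DecidableEq J] (v : J → ℕ)
    (d t : ℕ) (A : R → J → ℕ) : Prop :=
  ∀ T : Finset (J × ℕ), IsInteraction v t T →
    ∀ Te : Fin d → Finset (J × ℕ), (∀ i, IsExtension v T (Te i)) →
      ∃ r ∈ rho A T, ∀ i, r ∉ rho A (Te i)

set_option linter.unusedSectionVars false
set_option linter.unusedVariables false

open Finset in
lemma mem_rho {R J : Type*} [Fintype R] {A : R → J → ℕ} {T : Finset (J × ℕ)} {r : R} :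
    r ∈ rho A T ↔ ∀ p ∈ T, A r p.1 = p.2 := by simp [rho]

lemma rho_anti {R J : Type*} [Fintype R] {A : R → J → ℕ} {T T' : Finset (J × ℕ)}
    (h : T ⊆ T') : rho A T' ⊆ rho A T :=
  fun r hr => mem_rho.mpr fun p hp => mem_rho.mp hr p (h hp)

lemma fst_injOn {J : Type*} [DecidableEq J] {v : J → ℕ} {s : ℕ} {T : Finset (J × ℕ)}
    (hT : IsInteraction v s T) : Set.InjOn Prod.fst (T : Set (J × ℕ)) :=
  Finset.card_image_iff.mp (hT.2.1.trans hT.1.symm)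

lemma interaction_insert {J : Type*} [DecidableEq J] {v : J → ℕ} {s : ℕ}
    {T : Finset (J × ℕ)} (hT : IsInteraction v s T) {p : J × ℕ} (hp2 : p.2 < v p.1)
    (hcol : p.1 ∉ T.image Prod.fst) : IsInteraction v (s + 1) (insert p T) := by
  have hpT : p ∉ T := fun h => hcol (Finset.mem_image_of_mem _ h)
  refine ⟨by rw [Finset.card_insert_of_notMem hpT, hT.1], ?_, ?_⟩
  · rw [Finset.image_insert, Finset.card_insert_of_notMem hcol, hT.2.1]
  · intro q hq
    rcases Finset.mem_insert.mp hq with h | h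
    · rw [h]; exact hp2
    · exact hT.2.2 q h

lemma interaction_erase {J : Type*} [DecidableEq J] {v : J → ℕ} {s : ℕ}
    {T : Finset (J × ℕ)} (hT : IsInteraction v (s + 1) T) {q : J × ℕ} (hq : q ∈ T) :
    IsInteraction v s (T.erase q) := by
  have hcard : (T.erase q).card = s := by
    rw [Finset.card_erase_of_mem hq, hT.1]; omega
  refine ⟨hcard, ?_, fun p hp => hT.2.2 p (Finset.mem_of_mem_erase hp)⟩
  rw [Finset.card_image_iff.mpr ((fst_injOn hT).mono ?_), hcard]
  exact fun x hx => Finset.mem_of_mem_erase hx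

lemma inter_card_le_one {R J : Type*} [Fintype R] [DecidableEq R] [DecidableEq J]
    {v : J → ℕ} {t : ℕ} {A : R → J → ℕ}
    (hss : IsSuperSimple v t A) {T T' : Finset (J × ℕ)}
    (hT : IsInteraction v t T) (hT' : IsInteraction v t T') (hne : T ≠ T') :
    (rho A T ∩ rho A T').card ≤ 1 := by
  have hns : ¬ T' ⊆ T := fun h =>
    hne (Finset.eq_of_subset_of_card_le h (by rw [hT.1, hT'.1])).symm
  obtain ⟨p, hpT', hpT⟩ := Finset.not_subset.mp hns
  by_cases hcol : p.1 ∈ T.image Prod.fst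
  · obtain ⟨q, hq, hq1⟩ := Finset.mem_image.mp hcol
    have hq2 : q.2 ≠ p.2 := fun h => hpT (by rwa [show q = p from Prod.ext hq1 h] at hq)
    have : rho A T ∩ rho A T' = ∅ := by
      ext r
      simp only [Finset.mem_inter, Finset.notMem_empty, iff_false, not_and]
      intro h1 h2
      exact hq2 ((mem_rho.mp h1 q hq).symm.trans (hq1 ▸ mem_rho.mp h2 p hpT'))
    simp [this]
  · have hint := interaction_insert hT (hT'.2.2 p hpT') hcol
    have hsub : rho A T ∩ rho A T' ⊆ rho A (insert p T) := by
      intro r hr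
      rw [Finset.mem_inter] at hr
      refine mem_rho.mpr fun q hq => ?_
      rcases Finset.mem_insert.mp hq with h | h
      · rw [h]; exact mem_rho.mp hr.2 p hpT'
      · exact mem_rho.mp hr.1 q h
    exact le_trans (Finset.card_le_card hsub) (hss _ hint)

lemma oa_count {R J : Type*} [Fintype R] [DecidableEq J] {vlev lam t : ℕ}
    {A : R → J → ℕ} (hA : IsArray (fun _ : J => vlev) A)
    (hcard : Fintype.card R = lam * vlev ^ t)
    (hlow : ∀ T, IsInteraction (fun _ : J => vlev) t T → lam ≤ (rho A T).card)
    {T : Finset (J × ℕ)} (hT : IsInteraction (fun _ : J => vlev) t T) :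
    (rho A T).card = lam := by
  classical
  set C : Finset J := T.image Prod.fst with hCdef
  have hC : C.card = t := hT.2.1
  set G : ({x // x ∈ C} → Fin vlev) → Finset (J × ℕ) :=
    fun f => C.attach.image (fun c => (c.1, (f c : ℕ))) with hGdef
  set φ : R → ({x // x ∈ C} → Fin vlev) :=
    fun r c => ⟨A r c.1, hA r c.1⟩ with hφdef
  have hfiber : ∀ f, rho A (G f) = Finset.univ.filter (fun r => φ r = f) := by
    intro f
    ext r
    simp only [mem_rho, Finset.mem_filter, Finset.mem_univ, true_and]
    constructor
    · intro h
      funext c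
      refine Fin.ext ?_
      exact h (c.1, (f c : ℕ)) (Finset.mem_image_of_mem _ (Finset.mem_attach _ c))
    · intro h p hp
      obtain ⟨c, _, hc⟩ := Finset.mem_image.mp hp
      rw [← hc]
      exact congrArg Fin.val (congrFun h c)
  have hGint : ∀ f, IsInteraction (fun _ : J => vlev) t (G f) := by
    intro f
    have hinj : Set.InjOn (fun c : {x // x ∈ C} => (c.1, (f c : ℕ))) C.attach := by
      intro a _ b _ hab
      exact Subtype.ext (congrArg Prod.fst hab)
    have hcardG : (G f).card = t := by
      rw [hGdef]
      rw [Finset.card_image_of_injOn hinj, Finset.card_attach, hC]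
    refine ⟨hcardG, ?_, ?_⟩
    · have : (G f).image Prod.fst = C := by
        rw [hGdef, Finset.image_image]
        exact Finset.attach_image_val
      rw [this, hC]
    · rintro p hp
      rw [hGdef] at hp
      obtain ⟨c, _, hc⟩ := Finset.mem_image.mp hp
      rw [← hc]
      exact (f c).is_lt
  have huniq : ∀ c : {x // x ∈ C}, ∃! q, q ∈ T ∧ Prod.fst q = c.1 := by
    intro c
    obtain ⟨q, hq, hq1⟩ := Finset.mem_image.mp c.2
    refine ⟨q, ⟨hq, hq1⟩, ?_⟩
    rintro q' ⟨hq', hq'1⟩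
    exact fst_injOn hT hq' hq (hq'1.trans hq1.symm)
  set fT : {x // x ∈ C} → Fin vlev := fun c =>
    ⟨(T.choose _ (huniq c)).2, (hT.2.2 _ (T.choose_mem _ (huniq c)))⟩ with hfT
  have hTG : T = G fT := by
    refine (Finset.eq_of_subset_of_card_le ?_ (by rw [hT.1, (hGint fT).1])).symm
    intro p hp
    rw [hGdef] at hp
    obtain ⟨c, _, hc⟩ := Finset.mem_image.mp hp
    have hch := T.choose_mem _ (huniq c)
    have hprop : (T.choose _ (huniq c)).1 = c.1 := T.choose_property _ (huniq c)
    have : p = T.choose _ (huniq c) := by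
      rw [← hc, hfT]
      exact Prod.ext hprop.symm rfl
    rw [this]; exact hch
  have hsum : ∑ f : {x // x ∈ C} → Fin vlev, (rho A (G f)).card = Fintype.card R := by
    rw [Finset.card_univ.symm]
    rw [Finset.card_eq_sum_card_fiberwise (f := φ) (fun r _ => Finset.mem_univ (φ r))]
    exact Finset.sum_congr rfl (fun f _ => by rw [hfiber f])
  have hnum : Fintype.card ({x // x ∈ C} → Fin vlev) = vlev ^ t := by
    rw [Fintype.card_fun, Fintype.card_fin, Fintype.card_coe, hC]
  by_contra hne
  have hlt : lam < (rho A (G fT)).card := by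
    rw [← hTG]
    exact lt_of_le_of_ne (hlow T hT) (fun h => hne h.symm)
  have hstrict : ∑ _f : {x // x ∈ C} → Fin vlev, lam <
      ∑ f : {x // x ∈ C} → Fin vlev, (rho A (G f)).card :=
    Finset.sum_lt_sum (fun f _ => hlow _ (hGint f)) ⟨fT, Finset.mem_univ _, hlt⟩
  rw [hsum, Finset.sum_const, Finset.card_univ, hnum, hcard, smul_eq_mul, mul_comm] at hstrict
  exact lt_irrefl _ hstrict

lemma pad {k t d v : ℕ} {R : Type*} [Fintype R] [DecidableEq R]
    {A : R → Fin k → ℕ} (hdv : d < v)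
    (hDTA : IsDTA (fun _ : Fin k => v) d t A)
    {T : Finset (Fin k × ℕ)} (hT : IsInteraction (fun _ : Fin k => v) t T)
    {q : Fin k × ℕ} (hq : q ∈ T)
    {j : Fin k} (hj : j ∉ T.image Prod.fst)
    {S0 : Finset ℕ} (hS0v : S0 ⊆ Finset.range v) (hS0 : S0.card ≤ d)
    (hcov : ∀ r ∈ rho A T, A r j ∈ S0) : False := by
  classical
  have ht1 : 1 ≤ t := by
    rcases Nat.eq_zero_or_pos t with h | h
    · exfalso
      have : T = ∅ := Finset.card_eq_zero.mp (by rw [hT.1, h])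
      rw [this] at hq; exact absurd hq (Finset.notMem_empty q)
    · exact h
  obtain ⟨S', hS0S', hS'v, hS'card⟩ :=
    Finset.exists_subsuperset_card_eq hS0v hS0 (by rw [Finset.card_range]; omega)
  have hTer : IsInteraction (fun _ : Fin k => v) (t - 1) (T.erase q) := by
    have := interaction_erase (s := t - 1)
      (by rw [show t - 1 + 1 = t from by omega]; exact hT) hq
    exact this
  have hjer : j ∉ (T.erase q).image Prod.fst := fun h => by
    obtain ⟨p, hp, hp1⟩ := Finset.mem_image.mp h
    exact hj (Finset.mem_image.mpr ⟨p, Finset.mem_of_mem_erase hp, hp1⟩)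
  set F : ℕ → Finset (Fin k × ℕ) := fun σ => insert (j, σ) (T.erase q) with hF
  have hFint : ∀ σ ∈ S', IsInteraction (fun _ : Fin k => v) t (F σ) := by
    intro σ hσ
    have hσv : σ < v := Finset.mem_range.mp (hS'v hσ)
    have := interaction_insert hTer (p := (j, σ)) hσv hjer
    rwa [show t - 1 + 1 = t from by omega] at this
  have hFinj : Set.InjOn F S' := by
    intro a _ b _ hab
    have : ((j, a) : Fin k × ℕ) ∈ F b := hab ▸ Finset.mem_insert_self _ _
    rcases Finset.mem_insert.mp this with h | h
    · exact (Prod.ext_iff.mp h).2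
    · exact absurd (Finset.mem_image.mpr ⟨(j, a), h, rfl⟩) hjer
  set Ts : Finset (Finset (Fin k × ℕ)) := S'.image F with hTs
  have hTscard : Ts.card = d := by rw [hTs, Finset.card_image_of_injOn hFinj, hS'card]
  have hTsint : ∀ T' ∈ Ts, IsInteraction (fun _ : Fin k => v) t T' := by
    intro T' hT'
    obtain ⟨σ, hσ, hσT'⟩ := Finset.mem_image.mp hT'
    exact hσT' ▸ hFint σ hσ
  have hTnot : T ∉ Ts := by
    intro hmem
    obtain ⟨σ, hσ, hσT⟩ := Finset.mem_image.mp hmem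
    have : ((j, σ) : Fin k × ℕ) ∈ T := hσT ▸ Finset.mem_insert_self _ _
    exact hj (Finset.mem_image.mpr ⟨(j, σ), this, rfl⟩)
  have hsub : rho A T ⊆ rhoSet A Ts := by
    intro r hr
    refine Finset.mem_sup.mpr ⟨F (A r j), Finset.mem_image_of_mem F (hS0S' (hcov r hr)), ?_⟩
    refine mem_rho.mpr fun p hp => ?_
    rcases Finset.mem_insert.mp hp with h | h
    · rw [h]
    · exact mem_rho.mp hr p (Finset.mem_of_mem_erase h)
  exact hTnot ((hDTA.2 T hT Ts hTscard hTsint).mp hsub)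

/-- Corollary: with `N = (d+1)·v^t`, an array with entries in `Z_v`
is an (optimum) `(d,t)`-DTA iff it is a super-simple `OA_{d+1}(t,k,v)`. -/
theorem stmt_6 {t k d v : ℕ} (ht : 0 < t) (hk : 0 < k) (hd : 0 < d)
    (hv : 2 ≤ v) (htk : t < k) (hdv : d < v)
    (A : Fin ((d + 1) * v ^ t) → Fin k → ℕ)
    (hA : IsArray (fun _ : Fin k => v) A) :
    IsDTA (fun _ : Fin k => v) d t A ↔
      (IsSuperSimple (fun _ : Fin k => v) t A ∧ IsOA v (d + 1) t A) := by
  classical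
  constructor
  · intro hDTA
    -- every t-interaction is covered at least d+1 times
    have hlow : ∀ T, IsInteraction (fun _ : Fin k => v) t T → d + 1 ≤ (rho A T).card := by
      intro T hT
      by_contra hc
      push_neg at hc
      have hble : (rho A T).card ≤ d := by omega
      obtain ⟨q, hq⟩ := Finset.card_pos.mp (by rw [hT.1]; exact ht)
      obtain ⟨j, hj⟩ : ∃ j : Fin k, j ∉ T.image Prod.fst := by
        by_contra hall
        push_neg at hall
        have heq : (T.image Prod.fst) = Finset.univ := Finset.eq_univ_of_forall hall
        have := hT.2.1
        rw [heq, Finset.card_univ, Fintype.card_fin] at this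
        omega
      refine pad hdv hDTA hT hq hj (S0 := (rho A T).image (fun r => A r j)) ?_ ?_ ?_
      · intro x hx
        obtain ⟨r, _, hr⟩ := Finset.mem_image.mp hx
        exact Finset.mem_range.mpr (hr ▸ hA r j)
      · exact le_trans Finset.card_image_le hble
      · exact fun r hr => Finset.mem_image_of_mem _ hr
    have hOA : IsOA v (d + 1) t A := by
      refine ⟨hA, fun T hT => ?_⟩
      exact oa_count hA (by rw [Fintype.card_fin]) hlow hT
    refine ⟨?_, hOA⟩
    -- super-simplicity
    intro Te hTe
    by_contra hc
    push_neg at hc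
    have h2 : 2 ≤ (rho A Te).card := hc
    obtain ⟨p, hp⟩ := Finset.card_pos.mp (by rw [hTe.1]; omega)
    set T : Finset (Fin k × ℕ) := Te.erase p with hTdef
    have hT : IsInteraction (fun _ : Fin k => v) t T := interaction_erase hTe hp
    obtain ⟨q, hq⟩ := Finset.card_pos.mp (by rw [hT.1]; exact ht)
    have hj : p.1 ∉ T.image Prod.fst := by
      intro h
      obtain ⟨q', hq', hq'1⟩ := Finset.mem_image.mp h
      have : q' = p := fst_injOn hTe (Finset.mem_of_mem_erase hq') hp hq'1
      exact (Finset.ne_of_mem_erase hq') this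
    have hTeT : rho A Te ⊆ rho A T := rho_anti (Finset.erase_subset p Te)
    have hdiff : ((rho A T) \ (rho A Te)).card ≤ d - 1 := by
      rw [Finset.card_sdiff_of_subset hTeT]
      have := hOA.2 T hT
      omega
    set S0 : Finset ℕ := insert p.2 (((rho A T) \ (rho A Te)).image (fun r => A r p.1))
      with hS0def
    refine pad hdv hDTA hT hq hj (S0 := S0) ?_ ?_ ?_
    · intro x hx
      rcases Finset.mem_insert.mp hx with h | h
      · exact Finset.mem_range.mpr (h ▸ hTe.2.2 p hp)
      · obtain ⟨r, _, hr⟩ := Finset.mem_image.mp h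
        exact Finset.mem_range.mpr (hr ▸ hA r p.1)
    · calc S0.card ≤ (((rho A T) \ (rho A Te)).image (fun r => A r p.1)).card + 1 :=
            Finset.card_insert_le _ _
        _ ≤ ((rho A T) \ (rho A Te)).card + 1 :=
            Nat.add_le_add_right Finset.card_image_le 1
        _ ≤ d := by omega
    · intro r hr
      by_cases hrTe : r ∈ rho A Te
      · have : A r p.1 = p.2 := mem_rho.mp hrTe p hp
        rw [this]
        exact Finset.mem_insert_self _ _
      · exact Finset.mem_insert_of_mem
          (Finset.mem_image_of_mem _ (Finset.mem_sdiff.mpr ⟨hr, hrTe⟩))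
  · rintro ⟨hss, hOA⟩
    refine ⟨hA, fun T hT Ts hTscard hTsint => ?_⟩
    constructor
    · intro hsub
      by_contra hTnot
      have hbi : rho A T ⊆ Ts.biUnion (fun T' => rho A T ∩ rho A T') := by
        intro r hr
        obtain ⟨T', hT', hrT'⟩ := Finset.mem_sup.mp (hsub hr)
        exact Finset.mem_biUnion.mpr ⟨T', hT', Finset.mem_inter.mpr ⟨hr, hrT'⟩⟩
      have hcard : (rho A T).card ≤ d := by
        calc (rho A T).card ≤ (Ts.biUnion (fun T' => rho A T ∩ rho A T')).card :=
              Finset.card_le_card hbi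
          _ ≤ ∑ T' ∈ Ts, (rho A T ∩ rho A T').card := Finset.card_biUnion_le
          _ ≤ ∑ T' ∈ Ts, 1 := Finset.sum_le_sum (fun T' hT' =>
              inter_card_le_one hss hT (hTsint T' hT') (fun h => hTnot (h ▸ hT')))
          _ = d := by rw [Finset.sum_const, smul_eq_mul, mul_one, hTscard]
      rw [hOA.2 T hT] at hcard
      omega
    · intro hTmem r hr
      exact Finset.mem_sup.mpr ⟨T, hTmem, hr⟩
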